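/- Fix integers a, b ≥ 1 and let M₁₁, M₂₁, M₂₂ ∈ ℤ[q] be the rank-matrix entries of the box poset Fin a × Fin b defined combinatorially below. Then the polynomial q·M₁₁ + M₂₁ + M₂₂ (the trace of B·U, where B is the rank matrix of B_{a×b} and U = [[q,1],[0,1]]) is (a·b+1)-palindromic: its natDegree is at most ab+1 and its coefficient of q^j equals its coefficient of q^{ab+1−j} for all 0 ≤ j ≤ ab+1. -/
import Mathlib


open Polynomial

/-- A polynomial `p ∈ ℤ[q]` is `N`-palindromic if `natDegree p ≤ N` and
`coeff j = coeff (N - j)` for all `0 ≤ j ≤ N`. -/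
def IsPalindromic (p : Polynomial ℤ) (d : ℕ) : Prop :=
  p.natDegree ≤ d ∧ ∀ j ≤ d, p.coeff j = p.coeff (d - j)

/-- The lower sets of the box poset `Fin a × Fin b` with the componentwise order. -/
def boxLowerSets (a b : ℕ) : Finset (Finset (Fin a × Fin b)) :=
  Finset.univ.filter (fun I =>
    ∀ p ∈ I, ∀ p' : Fin a × Fin b, p'.1 ≤ p.1 → p'.2 ≤ p.2 → p' ∈ I)

/-- Partial rank polynomial of the box poset: `∑ q^|I|` over lower sets `I`
satisfying the constraint `P`. -/
noncomputable def boxEntry (a b : ℕ) (P : Finset (Fin a × Fin b) → Prop)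
    [DecidablePred P] : Polynomial ℤ :=
  ∑ I ∈ (boxLowerSets a b).filter P, X ^ I.card

namespace BoxProof

variable {a b : ℕ}

def sig (I : Finset (Fin a × Fin b)) : Finset (Fin a × Fin b) :=
  Iᶜ.map (Equiv.prodCongr Fin.revPerm Fin.revPerm).toEmbedding

lemma mem_sig {I : Finset (Fin a × Fin b)} {p : Fin a × Fin b} :
    p ∈ sig I ↔ (p.1.rev, p.2.rev) ∉ I := by
  simp only [sig, Finset.mem_map_equiv, Finset.mem_compl]
  rfl

lemma sig_sig (I : Finset (Fin a × Fin b)) : sig (sig I) = I := by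
  ext p
  simp [mem_sig, Fin.rev_rev]

lemma card_sig (I : Finset (Fin a × Fin b)) : (sig I).card = a * b - I.card := by
  simp [sig, Finset.card_compl]

lemma mem_boxLowerSets {I : Finset (Fin a × Fin b)} :
    I ∈ boxLowerSets a b ↔
      ∀ p ∈ I, ∀ p' : Fin a × Fin b, p'.1 ≤ p.1 → p'.2 ≤ p.2 → p' ∈ I := by
  simp [boxLowerSets]

lemma sig_mem_boxLowerSets {I : Finset (Fin a × Fin b)} (h : I ∈ boxLowerSets a b) :
    sig I ∈ boxLowerSets a b := by
  rw [mem_boxLowerSets] at h ⊢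
  intro p hp p' h1 h2
  rw [mem_sig] at hp ⊢
  intro hcon
  exact hp (h _ hcon (p.1.rev, p.2.rev) (Fin.rev_le_rev.mpr h1) (Fin.rev_le_rev.mpr h2))

lemma coeff_boxEntry (P : Finset (Fin a × Fin b) → Prop) [DecidablePred P] (k : ℕ) :
    (boxEntry a b P).coeff k =
      ((boxLowerSets a b).filter (fun I => P I ∧ I.card = k)).card := by
  rw [boxEntry, finset_sum_coeff]
  simp only [coeff_X_pow]
  rw [Finset.sum_boole, ← Finset.filter_filter]
  congr 2
  apply Finset.filter_congr
  intro x _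
  exact eq_comm

lemma coeff_boxEntry_zero (P : Finset (Fin a × Fin b) → Prop) [DecidablePred P]
    (k : ℕ) (hk : a * b < k) : (boxEntry a b P).coeff k = 0 := by
  rw [coeff_boxEntry]
  norm_cast
  rw [Finset.card_eq_zero, Finset.filter_eq_empty_iff]
  rintro I - ⟨-, hcard⟩
  have := I.card_le_univ
  simp at this
  omega

end BoxProof

namespace BoxProof

lemma count_symm (xL xR : Fin a × Fin b) (hrev : (xR.1.rev, xR.2.rev) = xL)
    (k : ℕ) (hk : k ≤ a * b) :
    ((boxLowerSets a b).filter (fun I => xR ∈ I ∧ I.card = k)).card =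
    ((boxLowerSets a b).filter (fun I => xL ∉ I ∧ I.card = a * b - k)).card := by
  have hrev2 : (xL.1.rev, xL.2.rev) = xR := by
    rw [← hrev]; simp [Fin.rev_rev]
  apply Finset.card_bij' (fun I _ => sig I) (fun I _ => sig I)
  · intro I hI
    rw [Finset.mem_filter] at hI ⊢
    obtain ⟨h1, h2, h3⟩ := hI
    refine ⟨sig_mem_boxLowerSets h1, ?_, ?_⟩
    · rw [mem_sig, hrev2, not_not]; exact h2
    · rw [card_sig, h3]
  · intro I hI
    rw [Finset.mem_filter] at hI ⊢
    obtain ⟨h1, h2, h3⟩ := hI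
    refine ⟨sig_mem_boxLowerSets h1, ?_, ?_⟩
    · rw [mem_sig, hrev]; exact h2
    · rw [card_sig, h3]; omega
  · intro I _; exact sig_sig I
  · intro I _; exact sig_sig I

lemma coeff_symm (xL xR : Fin a × Fin b) (hrev : (xR.1.rev, xR.2.rev) = xL)
    (k : ℕ) (hk : k ≤ a * b) :
    (boxEntry a b (fun I => xR ∈ I)).coeff k =
    (boxEntry a b (fun I => xL ∉ I)).coeff (a * b - k) := by
  rw [coeff_boxEntry, coeff_boxEntry]
  exact_mod_cast count_symm xL xR hrev k hk

lemma coeff_symm' (xL xR : Fin a × Fin b) (hrev : (xR.1.rev, xR.2.rev) = xL)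
    (k : ℕ) (hk : k ≤ a * b) :
    (boxEntry a b (fun I => xL ∉ I)).coeff k =
    (boxEntry a b (fun I => xR ∈ I)).coeff (a * b - k) := by
  have := coeff_symm xL xR hrev (a * b - k) (by omega)
  rw [this]
  congr 1
  omega

lemma coeff_split (xL xR : Fin a × Fin b) (k : ℕ) :
    (boxEntry a b (fun I => xR ∈ I ∧ xL ∉ I)).coeff k
    + (boxEntry a b (fun I => xR ∉ I ∧ xL ∉ I)).coeff k
    = (boxEntry a b (fun I => xL ∉ I)).coeff k := by
  rw [coeff_boxEntry, coeff_boxEntry, coeff_boxEntry]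
  norm_cast
  have h := Finset.card_filter_add_card_filter_not
    (s := (boxLowerSets a b).filter (fun I => xL ∉ I ∧ I.card = k)) (p := fun I => xR ∈ I)
  rw [Finset.filter_filter, Finset.filter_filter] at h
  rw [← h]
  congr 1
  · congr 1
    apply Finset.filter_congr; intro x _; constructor <;> intro hx <;> tauto
  · congr 1
    apply Finset.filter_congr; intro x _; constructor <;> intro hx <;> tauto

end BoxProof

open BoxProof in
/-- the trace `q·M₁₁ + M₂₁ + M₂₂` of `B·U`, where `B` is the rank matrix of
the box poset `B_{a×b}` and `U = [[q,1],[0,1]]`, is `(a·b+1)`-palindromic. -/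
theorem box_trace_BU_palindromic
    (a b : ℕ) (ha : 1 ≤ a) (hb : 1 ≤ b)
    (xL xR : Fin a × Fin b)
    (hxL : xL = (⟨a - 1, by omega⟩, ⟨0, by omega⟩))
    (hxR : xR = (⟨0, by omega⟩, ⟨b - 1, by omega⟩)) :
    IsPalindromic
      (X * boxEntry a b (fun I => xR ∈ I) +
       boxEntry a b (fun I => xR ∈ I ∧ xL ∉ I) +
       boxEntry a b (fun I => xR ∉ I ∧ xL ∉ I))
      (a * b + 1) := by
  have hrev : (xR.1.rev, xR.2.rev) = xL := by
    subst hxL hxR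
    simp only [Prod.mk.injEq]
    constructor <;> (apply Fin.ext; simp [Fin.val_rev]; try omega)
  have key1 : ∀ i : ℕ,
      (X * boxEntry a b (fun I => xR ∈ I) +
       boxEntry a b (fun I => xR ∈ I ∧ xL ∉ I) +
       boxEntry a b (fun I => xR ∉ I ∧ xL ∉ I)).coeff (i + 1)
      = (boxEntry a b (fun I => xR ∈ I)).coeff i
        + (boxEntry a b (fun I => xL ∉ I)).coeff (i + 1) := by
    intro i
    rw [coeff_add, coeff_add, coeff_X_mul, add_assoc, coeff_split xL xR]
  have key0 :
      (X * boxEntry a b (fun I => xR ∈ I) +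
       boxEntry a b (fun I => xR ∈ I ∧ xL ∉ I) +
       boxEntry a b (fun I => xR ∉ I ∧ xL ∉ I)).coeff 0
      = (boxEntry a b (fun I => xL ∉ I)).coeff 0 := by
    rw [coeff_add, coeff_add, mul_coeff_zero, coeff_X_zero, zero_mul, zero_add,
      coeff_split xL xR]
  constructor
  · rw [natDegree_le_iff_coeff_eq_zero]
    intro N hN
    obtain ⟨m, rfl⟩ : ∃ m, N = m + 1 := ⟨N - 1, by omega⟩
    rw [key1, coeff_boxEntry_zero (fun I => xR ∈ I) m (by omega),
      coeff_boxEntry_zero (fun I => xL ∉ I) (m + 1) (by omega), add_zero]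
  · intro j hj
    have hend :
        (X * boxEntry a b (fun I => xR ∈ I) +
         boxEntry a b (fun I => xR ∈ I ∧ xL ∉ I) +
         boxEntry a b (fun I => xR ∉ I ∧ xL ∉ I)).coeff (a * b + 1)
        = (X * boxEntry a b (fun I => xR ∈ I) +
         boxEntry a b (fun I => xR ∈ I ∧ xL ∉ I) +
         boxEntry a b (fun I => xR ∉ I ∧ xL ∉ I)).coeff 0 := by
      rw [key0, key1 (a * b),
        coeff_boxEntry_zero (fun I => xL ∉ I) (a * b + 1) (by omega), add_zero]
      have h0 := coeff_symm' xL xR hrev 0 (Nat.zero_le _)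
      simpa using h0.symm
    rcases Nat.eq_zero_or_pos j with rfl | hj1
    · simpa using hend.symm
    · by_cases hj2 : j = a * b + 1
      · subst hj2
        simpa using hend
      · -- 1 ≤ j ≤ a*b
        obtain ⟨m, rfl⟩ : ∃ m, j = m + 1 := ⟨j - 1, by omega⟩
        have hm : m + 1 ≤ a * b := by omega
        have h2 : a * b + 1 - (m + 1) = (a * b - m - 1) + 1 := by omega
        rw [key1 m, h2, key1 (a * b - m - 1)]
        have e1 : (boxEntry a b (fun I => xR ∈ I)).coeff m
            = (boxEntry a b (fun I => xL ∉ I)).coeff (a * b - m) :=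
          coeff_symm xL xR hrev m (by omega)
        have e2 : (boxEntry a b (fun I => xL ∉ I)).coeff (m + 1)
            = (boxEntry a b (fun I => xR ∈ I)).coeff (a * b - (m + 1)) :=
          coeff_symm' xL xR hrev (m + 1) hm
        have h3 : a * b - (m + 1) = a * b - m - 1 := by omega
        have h4 : a * b - m - 1 + 1 = a * b - m := by omega
        rw [e1, e2, h3, h4, add_comm]
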